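/- Let γ ∈ (−2,0] and let κ : ℝ³ → ℝ be measurable with 0 ≤ κ(x) ≤ κ₂ for all x ∈ ℝ³. Let f : ℝ³×ℝ³ → [0,∞) be measurable with ∫_{ℝ⁶} (1+|v|²) f(x,v) dx dv ≤ E₀ < ∞. Then there exists a constant C > 0, depending only on γ, such that for all (x,v) ∈ ℝ³×ℝ³ the operator norm of the matrix A[f](x,v) satisfies |A[f](x,v)| ≤ C κ₂ E₀ ⟨v⟩^{γ+2}. -/

import Mathlib

open MeasureTheory Real

noncomputable section

abbrev E3 : Type := EuclideanSpace ℝ (Fin 3)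

/-- `⟨v⟩ = √(1+|v|²)`. -/
def jap (x : E3) : ℝ := Real.sqrt (1 + ‖x‖ ^ 2)

/-- The Landau kernel `N(w) = |w|^{γ+2} (Id - w⊗w/|w|²)` (extended by `0` at `w = 0`). -/
def Nker (γ : ℝ) (w : E3) : Matrix (Fin 3) (Fin 3) ℝ :=
  Matrix.of fun i j => ‖w‖ ^ (γ + 2) * ((if i = j then (1 : ℝ) else 0) - w i * w j / ‖w‖ ^ 2)

/-- The diffusion matrix `A[f](x,v) = ∫ N(v-v*) κ(x-x*) f(x*,v*) dx* dv*`. -/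
def Amat (γ : ℝ) (κ : E3 → ℝ) (f : E3 × E3 → ℝ) (x v : E3) : Matrix (Fin 3) (Fin 3) ℝ :=
  Matrix.of fun i j => ∫ p : E3 × E3, Nker γ (v - p.2) i j * κ (x - p.1) * f p

/-!
Each entry of the Landau kernel is at most `2 |w|^{γ+2}`, and since `0 ≤ γ + 2 ≤ 2`,
`|v - v*|^{γ+2} ≤ (2 ⟨v⟩ ⟨v*⟩)^{γ+2} ≤ 4 ⟨v⟩^{γ+2} ⟨v*⟩²`. Integrating against `κ f` bounds every
entry of `A[f](x,v)` by `8 κ₂ E₀ ⟨v⟩^{γ+2}`, and by Cauchy–Schwarz an `n × n` matrix whose entries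
are bounded by `B` has operator norm at most `n B`.
-/

lemma Matrix.norm_toEuclideanCLM_le_of_abs_le {n : Type*} [Fintype n] [DecidableEq n]
    (A : Matrix n n ℝ) {B : ℝ} (hB : 0 ≤ B) (hA : ∀ i j, |A i j| ≤ B) :
    ‖Matrix.toEuclideanCLM (𝕜 := ℝ) A‖ ≤ Fintype.card n * B := by
  refine ContinuousLinearMap.opNorm_le_bound _ (by positivity) fun y => ?_
  have hrow : ∀ i, ∑ j, A i j ^ 2 ≤ Fintype.card n * B ^ 2 := fun i => by
    calc ∑ j, A i j ^ 2 ≤ ∑ _j : n, B ^ 2 :=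
          Finset.sum_le_sum fun j _ => sq_le_sq' (abs_le.mp (hA i j)).1 (abs_le.mp (hA i j)).2
      _ = Fintype.card n * B ^ 2 := by simp
  have hsq : ‖Matrix.toEuclideanCLM (𝕜 := ℝ) A y‖ ^ 2 ≤ (Fintype.card n * B * ‖y‖) ^ 2 :=
    calc ‖Matrix.toEuclideanCLM (𝕜 := ℝ) A y‖ ^ 2 = ∑ i, (∑ j, A i j * y j) ^ 2 := by
          simp [EuclideanSpace.norm_sq_eq, Matrix.mulVec, dotProduct]
      _ ≤ ∑ i, (∑ j, A i j ^ 2) * ∑ j, y j ^ 2 :=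
          Finset.sum_le_sum fun i _ => Finset.sum_mul_sq_le_sq_mul_sq _ _ _
      _ ≤ ∑ _i : n, (Fintype.card n * B ^ 2) * ‖y‖ ^ 2 := by
          simp only [EuclideanSpace.norm_sq_eq, Real.norm_eq_abs, sq_abs]
          exact Finset.sum_le_sum fun i _ => mul_le_mul_of_nonneg_right (hrow i) (by positivity)
      _ = (Fintype.card n * B * ‖y‖) ^ 2 := by
          simp only [Finset.sum_const, Finset.card_univ, nsmul_eq_mul]; ring
  exact (pow_le_pow_iff_left₀ (norm_nonneg _) (by positivity) two_ne_zero).mp hsq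

lemma one_le_jap (v : E3) : 1 ≤ jap v :=
  Real.one_le_sqrt.mpr (by nlinarith [sq_nonneg ‖v‖])

lemma norm_le_jap (v : E3) : ‖v‖ ≤ jap v :=
  Real.le_sqrt_of_sq_le (by linarith)

lemma jap_sq (v : E3) : jap v ^ 2 = 1 + ‖v‖ ^ 2 :=
  Real.sq_sqrt (by positivity)

lemma norm_sub_le_two_mul_jap_mul_jap (v u : E3) : ‖v - u‖ ≤ 2 * jap v * jap u := by
  have hv := one_le_jap v
  have hu := one_le_jap u
  nlinarith [norm_sub_le v u, norm_le_jap v, norm_le_jap u]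

lemma norm_sub_rpow_le {s : ℝ} (hs₀ : 0 ≤ s) (hs₂ : s ≤ 2) (v u : E3) :
    ‖v - u‖ ^ s ≤ 4 * jap v ^ s * (1 + ‖u‖ ^ 2) := by
  have hv : 0 ≤ jap v := zero_le_one.trans (one_le_jap v)
  have hu : 0 ≤ jap u := zero_le_one.trans (one_le_jap u)
  calc ‖v - u‖ ^ s ≤ (2 * jap v * jap u) ^ s :=
        Real.rpow_le_rpow (norm_nonneg _) (norm_sub_le_two_mul_jap_mul_jap v u) hs₀
    _ = 2 ^ s * jap v ^ s * jap u ^ s := by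
        rw [Real.mul_rpow (by positivity) hu, Real.mul_rpow zero_le_two hv]
    _ ≤ 2 ^ (2 : ℝ) * jap v ^ s * jap u ^ (2 : ℝ) := by
        gcongr
        · exact one_le_two
        · exact one_le_jap u
    _ = 4 * jap v ^ s * (1 + ‖u‖ ^ 2) := by
        rw [Real.rpow_two, Real.rpow_two, jap_sq]; norm_num

lemma abs_mul_apply_le_norm_sq {ι : Type*} [Fintype ι] (w : EuclideanSpace ℝ ι) (i j : ι) : |w i * w j| ≤ ‖w‖ ^ 2 := by
  have hi : |w i| ≤ ‖w‖ := PiLp.norm_apply_le w i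
  have hj : |w j| ≤ ‖w‖ := PiLp.norm_apply_le w j
  rw [abs_mul, sq]
  exact mul_le_mul hi hj (abs_nonneg _) (norm_nonneg _)

lemma abs_Nker_apply_le (γ : ℝ) (w : E3) (i j : Fin 3) :
    |Nker γ w i j| ≤ 2 * ‖w‖ ^ (γ + 2) := by
  have hpow : 0 ≤ ‖w‖ ^ (γ + 2) := Real.rpow_nonneg (norm_nonneg w) _
  have hproj : |w i * w j / ‖w‖ ^ 2| ≤ 1 := by
    rw [abs_div, abs_of_nonneg (sq_nonneg ‖w‖)]
    exact div_le_one_of_le₀ (abs_mul_apply_le_norm_sq w i j) (sq_nonneg _)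
  have hid : |(if i = j then (1 : ℝ) else 0)| ≤ 1 := by split_ifs <;> norm_num
  rw [Nker, Matrix.of_apply, abs_mul, abs_of_nonneg hpow, mul_comm]
  gcongr
  linarith [abs_sub _ _ |>.trans (add_le_add hid hproj)]

lemma abs_Amat_apply_le {γ κ₂ : ℝ} (hγ : γ ∈ Set.Icc (-2 : ℝ) 0) {κ : E3 → ℝ}
    (hκ : ∀ x : E3, 0 ≤ κ x ∧ κ x ≤ κ₂) {f : E3 × E3 → ℝ} (hf_nonneg : ∀ p, 0 ≤ f p)
    (hE_int : Integrable (fun p : E3 × E3 => (1 + ‖p.2‖ ^ 2) * f p)) (x v : E3) (i j : Fin 3) :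
    |Amat γ κ f x v i j| ≤
      8 * κ₂ * jap v ^ (γ + 2) * ∫ p : E3 × E3, (1 + ‖p.2‖ ^ 2) * f p := by
  have hintegrand : ∀ p : E3 × E3, ‖Nker γ (v - p.2) i j * κ (x - p.1) * f p‖ ≤
      8 * κ₂ * jap v ^ (γ + 2) * ((1 + ‖p.2‖ ^ 2) * f p) := fun p => by
    have hN := (abs_Nker_apply_le γ (v - p.2) i j).trans <| mul_le_mul_of_nonneg_left
      (norm_sub_rpow_le (by linarith [hγ.1]) (by linarith [hγ.2]) v p.2) zero_le_two
    have hκp : |κ (x - p.1)| ≤ κ₂ := (abs_of_nonneg (hκ _).1).trans_le (hκ _).2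
    rw [Real.norm_eq_abs, abs_mul, abs_mul, abs_of_nonneg (hf_nonneg p)]
    calc |Nker γ (v - p.2) i j| * |κ (x - p.1)| * f p
        ≤ 2 * (4 * jap v ^ (γ + 2) * (1 + ‖p.2‖ ^ 2)) * κ₂ * f p :=
          mul_le_mul_of_nonneg_right
            (mul_le_mul hN hκp (abs_nonneg _) ((abs_nonneg _).trans hN)) (hf_nonneg p)
      _ = 8 * κ₂ * jap v ^ (γ + 2) * ((1 + ‖p.2‖ ^ 2) * f p) := by ring
  rw [← integral_const_mul, Amat, Matrix.of_apply, ← Real.norm_eq_abs]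
  exact norm_integral_le_of_norm_le (hE_int.const_mul _) (.of_forall hintegrand)

theorem statement7_general (γ κ₂ E₀ : ℝ) (hγ : γ ∈ Set.Ioc (-2 : ℝ) 0)
    (κ : E3 → ℝ) (hκ : ∀ x : E3, 0 ≤ κ x ∧ κ x ≤ κ₂)
    (f : E3 × E3 → ℝ) (hf_nonneg : ∀ p, 0 ≤ f p)
    (hE_int : Integrable (fun p : E3 × E3 => (1 + ‖p.2‖ ^ 2) * f p))
    (hE : ∫ p : E3 × E3, (1 + ‖p.2‖ ^ 2) * f p ≤ E₀) :
    ∃ C : ℝ, 0 < C ∧ ∀ x v : E3,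
      ‖Matrix.toEuclideanCLM (𝕜 := ℝ) (Amat γ κ f x v)‖ ≤ C * κ₂ * E₀ * jap v ^ (γ + 2) := by
  have hκ₂ : 0 ≤ κ₂ := (hκ 0).1.trans (hκ 0).2
  have hE₀ : 0 ≤ E₀ :=
    (integral_nonneg fun p => mul_nonneg (by positivity) (hf_nonneg p)).trans hE
  refine ⟨24, by norm_num, fun x v => ?_⟩
  have hjap : 0 ≤ jap v ^ (γ + 2) := Real.rpow_nonneg (zero_le_one.trans (one_le_jap v)) _
  have hentry : ∀ i j, |Amat γ κ f x v i j| ≤ 8 * κ₂ * E₀ * jap v ^ (γ + 2) := fun i j =>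
    (abs_Amat_apply_le (Set.Ioc_subset_Icc_self hγ) hκ hf_nonneg hE_int x v i j).trans <| by
      rw [mul_right_comm _ E₀]
      exact mul_le_mul_of_nonneg_left hE (by positivity)
  calc ‖Matrix.toEuclideanCLM (𝕜 := ℝ) (Amat γ κ f x v)‖
      ≤ Fintype.card (Fin 3) * (8 * κ₂ * E₀ * jap v ^ (γ + 2)) :=
        Matrix.norm_toEuclideanCLM_le_of_abs_le _ (by positivity) hentry
    _ = 24 * κ₂ * E₀ * jap v ^ (γ + 2) := by
        simp only [Fintype.card_fin, Nat.cast_ofNat]; ring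

/-- Upper bound on the (ℓ² → ℓ²) operator norm of the diffusion matrix:
`|A[f](x,v)| ≤ C κ₂ E₀ ⟨v⟩^{γ+2}` with `C = C(γ)`. -/
theorem statement7 (γ κ₂ E₀ : ℝ) (hγ : γ ∈ Set.Ioc (-2 : ℝ) 0)
    (κ : E3 → ℝ) (hκ_meas : Measurable κ) (hκ : ∀ x : E3, 0 ≤ κ x ∧ κ x ≤ κ₂)
    (f : E3 × E3 → ℝ) (hf_meas : Measurable f) (hf_nonneg : ∀ p, 0 ≤ f p)
    (hE_int : Integrable (fun p : E3 × E3 => (1 + ‖p.2‖ ^ 2) * f p))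
    (hE : ∫ p : E3 × E3, (1 + ‖p.2‖ ^ 2) * f p ≤ E₀) :
    ∃ C : ℝ, 0 < C ∧ ∀ x v : E3,
      ‖Matrix.toEuclideanCLM (𝕜 := ℝ) (Amat γ κ f x v)‖ ≤ C * κ₂ * E₀ * jap v ^ (γ + 2) :=
  statement7_general γ κ₂ E₀ hγ κ hκ f hf_nonneg hE_int hE
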